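/- arXiv:1804.09176 — 3 statements merged into one kernel-verified Lean document; each statement's English description precedes it below -/
import Mathlib

section
/- Let X : ℝ × ℝ → ℝ be twice continuously differentiable with ∂X/∂n(n,t) < 0 for all (n,t). Let ρ : ℝ × ℝ → ℝ and v : ℝ × ℝ → ℝ be continuously differentiable functions (Eulerian density and speed as functions of position x and time t) such that for all (n,t): ρ(X(n,t), t) · (−∂X/∂n(n,t)) = 1 (i.e. the density equals the reciprocal of the spacing along trajectories) and v(X(n,t), t) = ∂X/∂t(n,t) (i.e. the Eulerian speed agrees with the trajectory speed). Then the Eulerian continuity equation ∂ρ/∂t(x,t) + ∂(ρ·v)/∂x(x,t) = 0 holds at every point of the form (x,t) = (X(n,t), t). -/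
/-- **Eulerian continuity equation along Lagrangian trajectories.**
Let `X : ℝ × ℝ → ℝ` be twice continuously differentiable with
`∂X/∂n (n, t) < 0` everywhere.  Let `ρ` and `v` be continuously differentiable
Eulerian density and speed (functions of position `x` and time `t`) such that
along trajectories `ρ (X (n,t), t) · (−∂X/∂n (n,t)) = 1` (density is the
reciprocal of the spacing) and `v (X (n,t), t) = ∂X/∂t (n,t)` (Eulerian speed
agrees with the trajectory speed).  Then the Eulerian continuity equation
`∂ρ/∂t (x, t) + ∂(ρ·v)/∂x (x, t) = 0` holds at every point of the form
`(x, t) = (X (n, t), t)`. -/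
theorem eulerian_continuity_from_lagrangian
    (X : ℝ × ℝ → ℝ) (hX : ContDiff ℝ 2 X)
    (hXn : ∀ n t : ℝ, deriv (fun m : ℝ => X (m, t)) n < 0)
    (ρ v : ℝ × ℝ → ℝ)
    (hρ : ContDiff ℝ 1 ρ) (hv : ContDiff ℝ 1 v)
    (hdens : ∀ n t : ℝ,
      ρ (X (n, t), t) * (-(deriv (fun m : ℝ => X (m, t)) n)) = 1)
    (hspeed : ∀ n t : ℝ,
      v (X (n, t), t) = deriv (fun τ : ℝ => X (n, τ)) t) :
    ∀ n t : ℝ,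
      deriv (fun τ : ℝ => ρ (X (n, t), τ)) t +
        deriv (fun x : ℝ => ρ (x, t) * v (x, t)) (X (n, t)) = 0 := by
  intro n t
  have hXd : Differentiable ℝ X := hX.differentiable (by norm_num)
  have hX' : ContDiff ℝ 1 (fderiv ℝ X) := hX.fderiv_right (by norm_num)
  have hX'd : Differentiable ℝ (fderiv ℝ X) := hX'.differentiable (by norm_num)
  have hρd : Differentiable ℝ ρ := hρ.differentiable (by norm_num)
  have hvd : Differentiable ℝ v := hv.differentiable (by norm_num)
  set x₀ : ℝ := X (n, t) with hx₀
  -- partial derivatives of X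
  have hXpart1 : ∀ m τ : ℝ, HasDerivAt (fun m' : ℝ => X (m', τ))
      (fderiv ℝ X (m, τ) (1, 0)) m := by
    intro m τ
    exact (hXd (m, τ)).hasFDerivAt.comp_hasDerivAt m
      ((hasDerivAt_id m).prodMk (hasDerivAt_const m τ))
  have hXpart2 : ∀ m τ : ℝ, HasDerivAt (fun τ' : ℝ => X (m, τ'))
      (fderiv ℝ X (m, τ) (0, 1)) τ := by
    intro m τ
    exact (hXd (m, τ)).hasFDerivAt.comp_hasDerivAt τ
      ((hasDerivAt_const τ m).prodMk (hasDerivAt_id τ))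
  set a : ℝ := fderiv ℝ X (n, t) (1, 0) with ha_def
  set b : ℝ := fderiv ℝ X (n, t) (0, 1) with hb_def
  have ha_neg : a < 0 := by
    have := hXn n t
    rwa [(hXpart1 n t).deriv] at this
  have ha_ne : a ≠ 0 := ne_of_lt ha_neg
  -- second derivative
  set B := fderiv ℝ (fderiv ℝ X) (n, t) with hB_def
  have hsymm : B (0, 1) (1, 0) = B (1, 0) (0, 1) :=
    second_derivative_symmetric (fun y => (hXd y).hasFDerivAt)
      (hX'd (n, t)).hasFDerivAt (0, 1) (1, 0)
  -- derivative of τ ↦ fderiv X (n, τ) (1,0)  at t is B (0,1) (1,0)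
  have hXn_t : HasDerivAt (fun τ : ℝ => fderiv ℝ X (n, τ) (1, 0)) (B (0, 1) (1, 0)) t := by
    have h1 : HasDerivAt (fun τ : ℝ => fderiv ℝ X (n, τ)) (B (0, 1)) t :=
      (hX'd (n, t)).hasFDerivAt.comp_hasDerivAt t
        ((hasDerivAt_const t n).prodMk (hasDerivAt_id t))
    have h2 := ((ContinuousLinearMap.apply ℝ ℝ ((1:ℝ), (0:ℝ))).hasFDerivAt).comp_hasDerivAt t h1
    simpa [Function.comp_def] using h2
  -- derivative of m ↦ fderiv X (m, t) (0,1) at n is B (1,0) (0,1)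
  have hXt_n : HasDerivAt (fun m : ℝ => fderiv ℝ X (m, t) (0, 1)) (B (1, 0) (0, 1)) n := by
    have h1 : HasDerivAt (fun m : ℝ => fderiv ℝ X (m, t)) (B (1, 0)) n :=
      (hX'd (n, t)).hasFDerivAt.comp_hasDerivAt n
        ((hasDerivAt_id n).prodMk (hasDerivAt_const n t))
    have h2 := ((ContinuousLinearMap.apply ℝ ℝ ((0:ℝ), (1:ℝ))).hasFDerivAt).comp_hasDerivAt n h1
    simpa [Function.comp_def] using h2
  set Dρ := fderiv ℝ ρ (x₀, t) with hDρ_def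
  set Dv := fderiv ℝ v (x₀, t) with hDv_def
  -- E2 : differentiate hdens in t
  have hcurve_t : HasDerivAt (fun τ : ℝ => ((X (n, τ), τ) : ℝ × ℝ)) ((b, 1) : ℝ × ℝ) t :=
    (hXpart2 n t).prodMk (hasDerivAt_id t)
  have hρ_comp : HasDerivAt (fun τ : ℝ => ρ (X (n, τ), τ)) (Dρ (b, 1)) t := by
    have h := HasFDerivAt.comp_hasDerivAt (f := fun τ : ℝ => ((X (n, τ), τ) : ℝ × ℝ))
      (l := ρ) t (hρd (X (n, t), t)).hasFDerivAt hcurve_t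
    simpa [Function.comp_def] using h
  have hE2 : Dρ (b, 1) * (-a) + ρ (x₀, t) * (-(B (0, 1) (1, 0))) = 0 := by
    have hmul := hρ_comp.mul hXn_t.neg
    have hfun : (fun τ : ℝ => ρ (X (n, τ), τ) * (-(fderiv ℝ X (n, τ) (1, 0))))
        = fun _ : ℝ => (1 : ℝ) := by
      funext τ
      rw [← (hXpart1 n τ).deriv]
      exact hdens n τ
    change HasDerivAt (fun τ : ℝ => ρ (X (n, τ), τ) * (-(fderiv ℝ X (n, τ) (1, 0))))
        (Dρ (b, 1) * (-a) + ρ (x₀, t) * (-(B (0, 1) (1, 0)))) t at hmul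
    rw [hfun] at hmul
    have := hmul.unique (hasDerivAt_const t 1)
    linarith [this]
  -- E3 : differentiate hspeed in n
  have hcurve_n : HasDerivAt (fun m : ℝ => ((X (m, t), t) : ℝ × ℝ)) ((a, 0) : ℝ × ℝ) n :=
    (hXpart1 n t).prodMk (hasDerivAt_const n t)
  have hv_comp : HasDerivAt (fun m : ℝ => v (X (m, t), t)) (Dv (a, 0)) n := by
    have h := HasFDerivAt.comp_hasDerivAt (f := fun m : ℝ => ((X (m, t), t) : ℝ × ℝ))
      (l := v) n (hvd (X (n, t), t)).hasFDerivAt hcurve_n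
    simpa [Function.comp_def] using h
  have hE3 : Dv (a, 0) = B (1, 0) (0, 1) := by
    have hfun : (fun m : ℝ => v (X (m, t), t)) = fun m : ℝ => fderiv ℝ X (m, t) (0, 1) := by
      funext m
      rw [hspeed m t, (hXpart2 m t).deriv]
    rw [hfun] at hv_comp
    exact hv_comp.unique hXt_n
  -- compute the two derivatives in the goal
  have hgoal1 : deriv (fun τ : ℝ => ρ (x₀, τ)) t = Dρ (0, 1) := by
    exact ((hρd (x₀, t)).hasFDerivAt.comp_hasDerivAt t
      ((hasDerivAt_const t x₀).prodMk (hasDerivAt_id t))).deriv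
  have hρx : HasDerivAt (fun x : ℝ => ρ (x, t)) (Dρ (1, 0)) x₀ :=
    (hρd (x₀, t)).hasFDerivAt.comp_hasDerivAt x₀
      ((hasDerivAt_id x₀).prodMk (hasDerivAt_const x₀ t))
  have hvx : HasDerivAt (fun x : ℝ => v (x, t)) (Dv (1, 0)) x₀ :=
    (hvd (x₀, t)).hasFDerivAt.comp_hasDerivAt x₀
      ((hasDerivAt_id x₀).prodMk (hasDerivAt_const x₀ t))
  have hgoal2 : deriv (fun x : ℝ => ρ (x, t) * v (x, t)) x₀
      = Dρ (1, 0) * v (x₀, t) + ρ (x₀, t) * Dv (1, 0) := (hρx.mul hvx).deriv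
  rw [hgoal1, hgoal2]
  -- linearity of Dρ, Dv
  have hlinρ : Dρ (b, 1) = b * Dρ (1, 0) + Dρ (0, 1) := by
    have : ((b, 1) : ℝ × ℝ) = b • ((1, 0) : ℝ × ℝ) + ((0, 1) : ℝ × ℝ) := by
      simp [Prod.ext_iff]
    rw [this, map_add, map_smul]; simp [smul_eq_mul]
  have hlinv : Dv (a, 0) = a * Dv (1, 0) := by
    have : ((a, 0) : ℝ × ℝ) = a • ((1, 0) : ℝ × ℝ) := by simp [Prod.ext_iff]
    rw [this, map_smul]; simp [smul_eq_mul]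
  have hv₀ : v (x₀, t) = b := by
    rw [hx₀, hspeed n t, (hXpart2 n t).deriv]
  rw [hv₀]
  rw [hlinρ] at hE2
  rw [hlinv] at hE3
  -- algebra: multiply goal by a
  rw [hsymm] at hE2
  have hkey : (Dρ (0, 1) + (Dρ (1, 0) * b + ρ (x₀, t) * Dv (1, 0))) * a = 0 := by
    linear_combination -hE2 + ρ (x₀, t) * hE3
  exact (mul_eq_zero.mp hkey).resolve_right ha_ne
end

section
/- Let X : ℝ × ℝ → ℝ be a twice continuously differentiable trajectory map of a reference vehicle class, with ∂X/∂n(n,t) < 0 for all (n,t); set s_r(n,t) = −∂X/∂n(n,t) and v_r(n,t) = ∂X/∂t(n,t). Let ρ : ℝ × ℝ → ℝ and v : ℝ × ℝ → ℝ be continuously differentiable Eulerian density and speed of another vehicle class satisfying the continuity equation ∂ρ/∂t(x,t) + ∂(ρ·v)/∂x(x,t) = 0 for all (x,t). Define σ(n,t) = s_r(n,t) · ρ(X(n,t), t) and φ(n,t) = ρ(X(n,t), t) · ( v_r(n,t) − v(X(n,t), t) ). Then ∂σ/∂t(n,t) + ∂φ/∂n(n,t) = 0 for all (n,t). -/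
lemma pd1 {F : Type*} [NormedAddCommGroup F] [NormedSpace ℝ F]
    (f : ℝ × ℝ → F) (hf : Differentiable ℝ f) (a b : ℝ) :
    HasDerivAt (fun x => f (x, b)) (fderiv ℝ f (a, b) (1, 0)) a :=
  (hf (a, b)).hasFDerivAt.comp_hasDerivAt a
    ((hasDerivAt_id a).prodMk (hasDerivAt_const a b))

lemma pd2 {F : Type*} [NormedAddCommGroup F] [NormedSpace ℝ F]
    (f : ℝ × ℝ → F) (hf : Differentiable ℝ f) (a b : ℝ) :
    HasDerivAt (fun y => f (a, y)) (fderiv ℝ f (a, b) (0, 1)) b :=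
  (hf (a, b)).hasFDerivAt.comp_hasDerivAt b
    ((hasDerivAt_const b a).prodMk (hasDerivAt_id b))

/-- **Method 2 Lagrangian conservation equation for a carried class.**
Let `X : ℝ × ℝ → ℝ` be a twice continuously differentiable trajectory map of a
reference vehicle class with `∂X/∂n (n,t) < 0` everywhere; set
`s_r (n,t) = −∂X/∂n (n,t)` and `v_r (n,t) = ∂X/∂t (n,t)`.  Let `ρ` and `v` be
continuously differentiable Eulerian density and speed of another vehicle
class satisfying the continuity equation `∂ρ/∂t + ∂(ρ·v)/∂x = 0` everywhere.
Define `σ (n,t) = s_r (n,t) · ρ (X (n,t), t)` and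
`φ (n,t) = ρ (X (n,t), t) · (v_r (n,t) − v (X (n,t), t))`.
Then `∂σ/∂t (n,t) + ∂φ/∂n (n,t) = 0` for all `(n,t)`. -/
theorem method2_lagrangian_conservation
    (X : ℝ × ℝ → ℝ) (hX : ContDiff ℝ 2 X)
    (hXn : ∀ n t : ℝ, deriv (fun m : ℝ => X (m, t)) n < 0)
    (s_r v_r : ℝ → ℝ → ℝ)
    (hs : ∀ n t : ℝ, s_r n t = -(deriv (fun m : ℝ => X (m, t)) n))
    (hvr : ∀ n t : ℝ, v_r n t = deriv (fun τ : ℝ => X (n, τ)) t)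
    (ρ v : ℝ × ℝ → ℝ)
    (hρ : ContDiff ℝ 1 ρ) (hv : ContDiff ℝ 1 v)
    (hcont : ∀ x t : ℝ,
      deriv (fun τ : ℝ => ρ (x, τ)) t +
        deriv (fun y : ℝ => ρ (y, t) * v (y, t)) x = 0)
    (σ φ : ℝ → ℝ → ℝ)
    (hσ : ∀ n t : ℝ, σ n t = s_r n t * ρ (X (n, t), t))
    (hφ : ∀ n t : ℝ, φ n t = ρ (X (n, t), t) * (v_r n t - v (X (n, t), t))) :
    ∀ n t : ℝ,
      deriv (fun τ : ℝ => σ n τ) t + deriv (fun m : ℝ => φ m t) n = 0 := by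
  intro n t
  have hXd : Differentiable ℝ X := hX.differentiable (by norm_num)
  have hρd : Differentiable ℝ ρ := hρ.differentiable one_ne_zero
  have hvd : Differentiable ℝ v := hv.differentiable one_ne_zero
  have hX' : ContDiff ℝ 1 (fderiv ℝ X) := hX.fderiv_right (by norm_num)
  have hX'd : Differentiable ℝ (fderiv ℝ X) := hX'.differentiable one_ne_zero
  set A : ℝ := fderiv ℝ X (n, t) (1, 0) with hA
  set B : ℝ := fderiv ℝ X (n, t) (0, 1) with hB
  set q : ℝ × ℝ := (X (n, t), t) with hq
  set Rx : ℝ := fderiv ℝ ρ q (1, 0) with hRx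
  set Rt : ℝ := fderiv ℝ ρ q (0, 1) with hRt
  set Vx : ℝ := fderiv ℝ v q (1, 0) with hVx
  set M : ℝ × ℝ →L[ℝ] ℝ × ℝ →L[ℝ] ℝ := fderiv ℝ (fderiv ℝ X) (n, t) with hM
  -- symmetry of the second derivative
  have hsym : M (0, 1) (1, 0) = M (1, 0) (0, 1) :=
    (hX.contDiffAt.isSymmSndFDerivAt (by norm_num)) (0, 1) (1, 0)
  -- derivative of ρ along the curve τ ↦ (X (n, τ), τ)
  have hcurve : HasDerivAt (fun τ : ℝ => (X (n, τ), τ)) (B, 1) t :=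
    (pd2 X hXd n t).prodMk (hasDerivAt_id t)
  have hρcurve : HasDerivAt (fun τ : ℝ => ρ (X (n, τ), τ)) (Rx * B + Rt) t := by
    have h := HasFDerivAt.comp_hasDerivAt (f := fun τ : ℝ => (X (n, τ), τ)) t
      (hρd (X (n, t), t)).hasFDerivAt hcurve
    refine h.congr_deriv ?_
    have e : (B, (1 : ℝ)) = B • ((1 : ℝ), (0 : ℝ)) + ((0 : ℝ), (1 : ℝ)) := by
      simp [Prod.ext_iff]
    rw [e, map_add, map_smul, smul_eq_mul, ← hq, ← hRx, ← hRt]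
    ring
  -- mixed second derivative: d/dτ of (∂X/∂n)(n, τ)
  have hmix : HasDerivAt (fun τ : ℝ => fderiv ℝ X (n, τ) (1, 0)) (M (0, 1) (1, 0)) t := by
    have h := (pd2 (fderiv ℝ X) hX'd n t).clm_apply
      (hasDerivAt_const t ((1 : ℝ), (0 : ℝ)))
    simpa using h
  -- derivative of σ(n, ·) at t
  have hσt : HasDerivAt (fun τ : ℝ => σ n τ)
      (-(M (0, 1) (1, 0)) * ρ q + -A * (Rx * B + Rt)) t := by
    have heq : (fun τ : ℝ => σ n τ)
        = fun τ : ℝ => -(fderiv ℝ X (n, τ) (1, 0)) * ρ (X (n, τ), τ) := by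
      funext τ
      rw [hσ, hs, (pd1 X hXd n τ).deriv]
    rw [heq]
    exact hmix.neg.mul hρcurve
  -- horizontal curve m ↦ (X (m, t), t)
  have hcurve2 : HasDerivAt (fun m : ℝ => (X (m, t), t)) (A, 0) n :=
    (pd1 X hXd n t).prodMk (hasDerivAt_const n t)
  have hAsmul : ∀ g : ℝ × ℝ → ℝ, Differentiable ℝ g →
      HasDerivAt (fun m : ℝ => g (X (m, t), t)) (fderiv ℝ g q (1, 0) * A) n := by
    intro g hg
    have h := HasFDerivAt.comp_hasDerivAt (f := fun m : ℝ => (X (m, t), t)) n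
      (hg (X (n, t), t)).hasFDerivAt hcurve2
    refine h.congr_deriv ?_
    have e : (A, (0 : ℝ)) = A • ((1 : ℝ), (0 : ℝ)) := by simp [Prod.ext_iff]
    rw [e, map_smul, smul_eq_mul, ← hq]
    ring
  have hρn : HasDerivAt (fun m : ℝ => ρ (X (m, t), t)) (Rx * A) n := hAsmul ρ hρd
  have hvn : HasDerivAt (fun m : ℝ => v (X (m, t), t)) (Vx * A) n := hAsmul v hvd
  -- mixed second derivative: d/dm of (∂X/∂t)(m, t)
  have hmix2 : HasDerivAt (fun m : ℝ => fderiv ℝ X (m, t) (0, 1)) (M (1, 0) (0, 1)) n := by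
    have h := (pd1 (fderiv ℝ X) hX'd n t).clm_apply
      (hasDerivAt_const n ((0 : ℝ), (1 : ℝ)))
    simpa using h
  -- derivative of φ(·, t) at n
  have hφn : HasDerivAt (fun m : ℝ => φ m t)
      (Rx * A * (B - v q) + ρ q * (M (1, 0) (0, 1) - Vx * A)) n := by
    have heq : (fun m : ℝ => φ m t)
        = fun m : ℝ => ρ (X (m, t), t) * (fderiv ℝ X (m, t) (0, 1) - v (X (m, t), t)) := by
      funext m
      rw [hφ, hvr, (pd2 X hXd m t).deriv]
    rw [heq]
    exact hρn.mul (hmix2.sub hvn)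
  -- the continuity equation at (X (n, t), t)
  have hRt' : deriv (fun τ : ℝ => ρ (X (n, t), τ)) t = Rt := (pd2 ρ hρd (X (n, t)) t).deriv
  have hprod : deriv (fun y : ℝ => ρ (y, t) * v (y, t)) (X (n, t))
      = Rx * v q + ρ q * Vx :=
    ((pd1 ρ hρd (X (n, t)) t).mul (pd1 v hvd (X (n, t)) t)).deriv
  have hcont' : Rt + (Rx * v q + ρ q * Vx) = 0 := by
    have h := hcont (X (n, t)) t
    rwa [hRt', hprod] at h
  rw [hσt.deriv, hφn.deriv]
  linear_combination (-(ρ q)) * hsym - A * hcont'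
end

section
/- Let s_r, s_i, v_r, v_i : ℝ × ℝ → ℝ be continuously differentiable functions of (n,t) with s_r(n,t) > 0 and s_i(n,t) > 0 everywhere, and suppose the reference-class equation ∂s_r/∂t + ∂v_r/∂n = 0 holds everywhere. Then at any point (n,t), the conservative equation ∂(s_r/s_i)/∂t + ∂((v_r − v_i)/s_i)/∂n = 0 holds if and only if the non-conservative equation ∂s_i/∂t + (s_i/s_r)·∂v_i/∂n − ((v_i − v_r)/s_r)·∂s_i/∂n = 0 holds at that point. -/
/-- **Equivalence of the conservative and non-conservative forms (method 2).**
Let `s_r, s_i, v_r, v_i : ℝ × ℝ → ℝ` be continuously differentiable functions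
of `(n, t)` with `s_r > 0` and `s_i > 0` everywhere, and suppose the
reference-class equation `∂s_r/∂t + ∂v_r/∂n = 0` holds everywhere.  Then at
any point `(n, t)`, the conservative equation
`∂(s_r/s_i)/∂t + ∂((v_r − v_i)/s_i)/∂n = 0` holds if and only if the
non-conservative equation
`∂s_i/∂t + (s_i/s_r)·∂v_i/∂n − ((v_i − v_r)/s_r)·∂s_i/∂n = 0`
holds at that point. -/
theorem method2_conservative_iff_nonconservative
    (s_r s_i v_r v_i : ℝ × ℝ → ℝ)
    (hsr : ContDiff ℝ 1 s_r) (hsi : ContDiff ℝ 1 s_i)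
    (hvr : ContDiff ℝ 1 v_r) (hvi : ContDiff ℝ 1 v_i)
    (hsr_pos : ∀ n t : ℝ, 0 < s_r (n, t))
    (hsi_pos : ∀ n t : ℝ, 0 < s_i (n, t))
    (href : ∀ n t : ℝ,
      deriv (fun τ : ℝ => s_r (n, τ)) t +
        deriv (fun m : ℝ => v_r (m, t)) n = 0)
    (n t : ℝ) :
    (deriv (fun τ : ℝ => s_r (n, τ) / s_i (n, τ)) t +
        deriv (fun m : ℝ => (v_r (m, t) - v_i (m, t)) / s_i (m, t)) n = 0) ↔
    (deriv (fun τ : ℝ => s_i (n, τ)) t +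
        (s_i (n, t) / s_r (n, t)) * deriv (fun m : ℝ => v_i (m, t)) n -
        ((v_i (n, t) - v_r (n, t)) / s_r (n, t)) *
          deriv (fun m : ℝ => s_i (m, t)) n = 0) := by
  have hT : ∀ (f : ℝ × ℝ → ℝ), ContDiff ℝ 1 f →
      DifferentiableAt ℝ (fun τ : ℝ => f (n, τ)) t := by
    intro f hf
    exact (hf.differentiable one_ne_zero (n, t)).comp t
      (DifferentiableAt.prodMk (differentiableAt_const n) differentiableAt_id)
  have hN : ∀ (f : ℝ × ℝ → ℝ), ContDiff ℝ 1 f →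
      DifferentiableAt ℝ (fun m : ℝ => f (m, t)) n := by
    intro f hf
    exact (hf.differentiable one_ne_zero (n, t)).comp n
      (DifferentiableAt.prodMk differentiableAt_id (differentiableAt_const t))
  have hsrne : s_r (n, t) ≠ 0 := (hsr_pos n t).ne'
  have hsine : s_i (n, t) ≠ 0 := (hsi_pos n t).ne'
  set a := deriv (fun τ : ℝ => s_r (n, τ)) t with ha
  set b := deriv (fun τ : ℝ => s_i (n, τ)) t with hb
  set c := deriv (fun m : ℝ => v_r (m, t)) n with hc
  set d := deriv (fun m : ℝ => v_i (m, t)) n with hd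
  set e := deriv (fun m : ℝ => s_i (m, t)) n with he
  have h1 : deriv (fun τ : ℝ => s_r (n, τ) / s_i (n, τ)) t
      = (a * s_i (n, t) - s_r (n, t) * b) / (s_i (n, t)) ^ 2 := by
    rw [deriv_fun_div (hT s_r hsr) (hT s_i hsi) hsine]
  have h2 : deriv (fun m : ℝ => (v_r (m, t) - v_i (m, t)) / s_i (m, t)) n
      = ((c - d) * s_i (n, t) - (v_r (n, t) - v_i (n, t)) * e) / (s_i (n, t)) ^ 2 := by
    rw [deriv_fun_div ((hN v_r hvr).fun_sub (hN v_i hvi)) (hN s_i hsi) hsine,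
      deriv_fun_sub (hN v_r hvr) (hN v_i hvi)]
  have hac : a = -c := by have := href n t; linarith
  have key : (a * s_i (n, t) - s_r (n, t) * b) / (s_i (n, t)) ^ 2 +
      ((c - d) * s_i (n, t) - (v_r (n, t) - v_i (n, t)) * e) / (s_i (n, t)) ^ 2
      = -(s_r (n, t) / (s_i (n, t)) ^ 2) *
        (b + (s_i (n, t) / s_r (n, t)) * d -
          ((v_i (n, t) - v_r (n, t)) / s_r (n, t)) * e) := by
    rw [hac]; field_simp; ring
  rw [h1, h2, key, mul_eq_zero, neg_eq_zero, div_eq_zero_iff]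
  constructor
  · rintro (h | h)
    · rcases h with h | h
      · exact absurd h hsrne
      · exact absurd h (pow_ne_zero 2 hsine)
    · exact h
  · exact fun h => Or.inr h
end
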